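/- With notation as above, A⊗_R M = ι_M(M) ⊕ (Δ_M − ι_M∘m_M∘Δ_M)(M) as A-modules. -/

import Mathlib

/-!
Write `A ⊗ M = 1 ⊗ M ⊕ X ⊗ M`. The `X`-coordinate `A ⊗ M → M` vanishes exactly on `ι_M(M)`,
and its composite with `j_M = Δ_M − ι_M m_M Δ_M` is `1 + c X_M`, which is invertible because
`X_M² = 0`. Hence `j_M(M)` is a complement of that kernel. Both summands are `A`-submodules
because `X` acts on `A ⊗ M` as `id ⊗ X_M`, which commutes with `ι_M` and `j_M`.
-/

open TensorProduct

noncomputable section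

abbrev R : Type := Polynomial ℤ
abbrev A : Type := R × R

/-- The `R`-linear map out of `A = R·1 ⊕ R·X` sending `1 ↦ p` and `X ↦ q`. -/
def lmap {P : Type*} [AddCommGroup P] [Module R P] (p q : P) : A →ₗ[R] P :=
  (LinearMap.toSpanSingleton R P p).coprod (LinearMap.toSpanSingleton R P q)

/-- The basis element `1` of `A`. -/
def one' : A := (1, 0)

/-- The basis element `X` of `A`. -/
def Xa : A := (0, 1)

/-- Multiplication `m : A ⊗ A → A`, with `1·1 = 1`, `1·X = X·1 = X`, `X² = 0`. -/
def mul : A ⊗[R] A →ₗ[R] A :=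
  TensorProduct.lift (lmap LinearMap.id (lmap Xa 0))

/-- Comultiplication `Δ(1) = 1⊗X + X⊗1 + c X⊗X`, `Δ(X) = X⊗X`. -/
def Δ : A →ₗ[R] A ⊗[R] A :=
  lmap (one' ⊗ₜ[R] Xa + Xa ⊗ₜ[R] one' + (Polynomial.X : R) • (Xa ⊗ₜ[R] Xa)) (Xa ⊗ₜ[R] Xa)

/-- Counit `ε(1) = -c`, `ε(X) = 1`. -/
def ε : A →ₗ[R] R := lmap (-Polynomial.X) 1

/-- `Δ_M : M → A ⊗ M`, `t ↦ X⊗t + 1⊗Xt + cX⊗Xt`. -/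
def ΔM (M : Type*) [AddCommGroup M] [Module R M] (XM : M →ₗ[R] M) :
    M →ₗ[R] A ⊗[R] M :=
  TensorProduct.mk R A M Xa + (TensorProduct.mk R A M one') ∘ₗ XM +
    (Polynomial.X : R) • ((TensorProduct.mk R A M Xa) ∘ₗ XM)

/-- `m_M : A ⊗ M → M`, `1⊗t ↦ t`, `X⊗t ↦ Xt`. -/
def mM (M : Type*) [AddCommGroup M] [Module R M] (XM : M →ₗ[R] M) :
    A ⊗[R] M →ₗ[R] M :=
  TensorProduct.lift (lmap LinearMap.id XM)

/-- `ι_M : M → A ⊗ M`, `t ↦ 1⊗t`. -/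
def ιM (M : Type*) [AddCommGroup M] [Module R M] : M →ₗ[R] A ⊗[R] M :=
  TensorProduct.mk R A M one'

/-- The action of `X ∈ A` on `A ⊗ M`, namely `Id_A ⊗ X_M` (since `a(x⊗y) = x⊗(ay)`). -/
def XT (M : Type*) [AddCommGroup M] [Module R M] (XM : M →ₗ[R] M) :
    A ⊗[R] M →ₗ[R] A ⊗[R] M :=
  TensorProduct.map LinearMap.id XM

/-- `j_M = Δ_M − ι_M∘m_M∘Δ_M`. -/
def jM (M : Type*) [AddCommGroup M] [Module R M] (XM : M →ₗ[R] M) :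
    M →ₗ[R] A ⊗[R] M :=
  ΔM M XM - (ιM M) ∘ₗ (mM M XM) ∘ₗ (ΔM M XM)

open LinearMap

section ComplementOfSection

variable {S N P : Type*} [Ring S] [AddCommGroup N] [Module S N] [AddCommGroup P] [Module S P]

theorem isCompl_ker_range_of_leftInverse {f : N →ₗ[S] P} {g : P →ₗ[S] N}
    (hfg : Function.LeftInverse f g) : IsCompl (ker f) (range g) := by
  refine ⟨Submodule.disjoint_def.2 ?_, Submodule.codisjoint_iff_exists_add_eq.2 fun x ↦ ?_⟩
  · rintro _ hx ⟨y, rfl⟩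
    rw [mem_ker, hfg] at hx
    rw [hx, map_zero]
  · exact ⟨x - g (f x), g (f x), by rw [mem_ker, map_sub, hfg, sub_self], mem_range_self g _,
      sub_add_cancel _ _⟩

theorem isCompl_ker_range_of_bijective_comp {f : N →ₗ[S] P} {g : P →ₗ[S] N}
    (hfg : Function.Bijective (f ∘ₗ g)) : IsCompl (ker f) (range g) := by
  let e := LinearEquiv.ofBijective (f ∘ₗ g) hfg
  have hrange : range (g ∘ₗ e.symm.toLinearMap) = range g :=
    range_comp_of_range_eq_top g e.symm.range
  rw [← hrange]
  exact isCompl_ker_range_of_leftInverse e.apply_symm_apply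

theorem map_range_le_range_of_comp_eq {f : N →ₗ[S] N} {g : P →ₗ[S] N} {h : P →ₗ[S] P}
    (hfg : f ∘ₗ g = g ∘ₗ h) : (range g).map f ≤ range g := by
  rw [← range_comp, hfg]
  exact range_comp_le_range h g

end ComplementOfSection

theorem bijective_one_add_smul_of_comp_self_eq_zero {S N : Type*} [CommRing S] [AddCommGroup N]
    [Module S N] {u : N →ₗ[S] N} (hu : u ∘ₗ u = 0) (c : S) :
    Function.Bijective ⇑(1 + c • u) := by
  have hnil : IsNilpotent (c • u) :=
    ⟨2, by rw [smul_pow, pow_two u, Module.End.mul_eq_comp, hu, smul_zero]⟩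
  exact (Module.End.isUnit_iff _).1 hnil.isUnit_one_add

@[simp] theorem lmap_one' {P : Type*} [AddCommGroup P] [Module R P] (p q : P) :
    lmap p q one' = p := by simp [lmap, one']

@[simp] theorem lmap_Xa {P : Type*} [AddCommGroup P] [Module R P] (p q : P) :
    lmap p q Xa = q := by simp [lmap, Xa]

section TensorA

variable (M : Type*) [AddCommGroup M] [Module R M]

def coeffOne : A ⊗[R] M →ₗ[R] M := TensorProduct.lift (lmap LinearMap.id 0)

def coeffX : A ⊗[R] M →ₗ[R] M := TensorProduct.lift (lmap 0 LinearMap.id)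

theorem ιM_comp_coeffOne_add_mk_comp_coeffX :
    ιM M ∘ₗ coeffOne M + TensorProduct.mk R A M Xa ∘ₗ coeffX M = LinearMap.id := by
  ext m <;> simp [ιM, coeffOne, coeffX, lmap, one', Xa]

theorem ker_coeffX : ker (coeffX M) = range (ιM M) := by
  refine le_antisymm ?_ ?_
  · intro x hx
    refine ⟨coeffOne M x, ?_⟩
    rw [mem_ker] at hx
    simpa [hx] using congr($(ιM_comp_coeffOne_add_mk_comp_coeffX M) x)
  · rintro _ ⟨m, rfl⟩
    simp [ιM, coeffX]

variable {M} (XM : M →ₗ[R] M)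

theorem coeffX_comp_jM : coeffX M ∘ₗ jM M XM = 1 + (Polynomial.X : R) • XM := by
  ext t
  simp [coeffX, jM, ΔM, ιM]

theorem XT_comp_ιM : XT M XM ∘ₗ ιM M = ιM M ∘ₗ XM := rfl

theorem XT_comp_jM : XT M XM ∘ₗ jM M XM = jM M XM ∘ₗ XM := by
  ext t
  simp [XT, jM, ΔM, ιM, mM]

end TensorA

/-- `A ⊗_R M = ι_M(M) ⊕ (Δ_M − ι_M∘m_M∘Δ_M)(M)` as `A`-modules. -/
theorem stmt12 (M : Type*) [AddCommGroup M] [Module R M]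
    (XM : M →ₗ[R] M) (hX : XM ∘ₗ XM = 0) :
    IsCompl (LinearMap.range (ιM M)) (LinearMap.range (jM M XM)) ∧
    Submodule.map (XT M XM) (LinearMap.range (ιM M)) ≤ LinearMap.range (ιM M) ∧
    Submodule.map (XT M XM) (LinearMap.range (jM M XM)) ≤ LinearMap.range (jM M XM) := by
  refine ⟨?_, map_range_le_range_of_comp_eq (XT_comp_ιM XM),
    map_range_le_range_of_comp_eq (XT_comp_jM XM)⟩
  rw [← ker_coeffX]
  apply isCompl_ker_range_of_bijective_comp
  rw [coeffX_comp_jM]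
  exact bijective_one_add_smul_of_comp_self_eq_zero hX _
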